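/- Let H be a Hopf algebra over a commutative ring K with antipode S, C a left H-module coalgebra, and C* its convolution dual, with right H-action on C* given by (xh)(c) = x(hc). Then the rational part Rat(C*) of C* (as a left C*-module under convolution) is a right H-submodule of C*: if y ∈ Rat(C*) with rational parameters {(y_i, c_i)}, then for all h ∈ H, yh ∈ Rat(C*) with rational parameters {(y_i·h₂, S(h₁)·c_i)}. -/

import Mathlib

/-!
Write `x·g = x ∘ (g·-)` for `x ∈ C*`. Because the action is a coalgebra map,
`(x * y)·h = ∑ (x·h₁) * (y·h₂)`, and coassociativity together with the antipode axiom gives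
`∑ S(h₁)h₂ ⊗ h₃ = 1 ⊗ h`. Hence `x * (y·h) = ∑ ((x·S(h₁)) * y)·h₂`, and if `x' * y = ∑ x'(cᵢ) yᵢ`
for all `x'`, the right-hand side is `∑ x(S(h₁)cᵢ) (yᵢ·h₂)`.
-/

universe u
open TensorProduct

variable {K : Type u} [CommRing K] {C : Type u} [AddCommGroup C] [Module K C]
  [Coalgebra K C]

/-- The convolution product on the dual `C* = Hom_K(C, K)` of a coalgebra. -/
noncomputable def conv (x y : Module.Dual K C) : Module.Dual K C :=
  (TensorProduct.lid K K).toLinearMap ∘ₗ (TensorProduct.map x y) ∘ₗ Coalgebra.comul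

/-- `y ∈ C*` is rational (for the left regular `C*`-module structure on `C*`). -/
def IsRationalDual (y : Module.Dual K C) : Prop :=
  ∃ (n : ℕ) (c : Fin n → C) (y' : Fin n → Module.Dual K C),
    ∀ x : Module.Dual K C, conv x y = ∑ i, x (c i) • y' i

namespace HopfAlgebra

variable {R A : Type*} [CommSemiring R] [Semiring A] [HopfAlgebra R A] {ι : Type*} {a : A}

lemma sum_rTensor_mulLeft_antipode_comul (repr : Coalgebra.Repr R a ι) :
    ∑ i ∈ repr.index,
      (LinearMap.mulLeft R (antipode R (repr.left i))).rTensor A (Coalgebra.comul (repr.right i)) =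
      1 ⊗ₜ a := by
  set Θ : A ⊗[R] (A ⊗[R] A) →ₗ[R] A ⊗[R] A :=
    (LinearMap.mul' R A ∘ₗ (antipode R).rTensor A).rTensor A ∘ₗ
      (TensorProduct.assoc R A A A).symm.toLinearMap
  have hΘ (u v : A) : Θ (u ⊗ₜ Coalgebra.comul v) =
      (LinearMap.mulLeft R (antipode R u)).rTensor A (Coalgebra.comul v) := by
    induction Coalgebra.comul (R := R) v using TensorProduct.induction_on with
    | zero => simp
    | tmul v₁ v₂ => simp [Θ]
    | add s t hs ht => simp only [tmul_add, map_add, hs, ht]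
  calc _ = Θ (∑ i ∈ repr.index, repr.left i ⊗ₜ Coalgebra.comul (repr.right i)) := by
        simp only [map_sum, hΘ]
    _ = Θ (TensorProduct.assoc R A A A
          ((Coalgebra.comul (R := R)).rTensor A (Coalgebra.comul a))) := by
        rw [Coalgebra.coassoc_apply, ← repr.eq]
        simp [map_sum]
    _ = (LinearMap.mul' R A ∘ₗ (antipode R).rTensor A ∘ₗ Coalgebra.comul).rTensor A
          (Coalgebra.comul a) := by
        simp [Θ, LinearMap.rTensor_comp_apply]
    _ = 1 ⊗ₜ a := by
        rw [mul_antipode_rTensor_comul, LinearMap.rTensor_comp_apply,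
          Coalgebra.rTensor_counit_comul]
        simp

end HopfAlgebra

variable (K C) in
noncomputable def convBilin : Module.Dual K C →ₗ[K] Module.Dual K C →ₗ[K] Module.Dual K C :=
  (TensorProduct.mapBilinear (RingHom.id K) C C K K).compr₂
    (LinearMap.lcomp K K Coalgebra.comul ∘ₗ
      LinearMap.llcomp K (C ⊗[K] C) (K ⊗[K] K) K (TensorProduct.lid K K).toLinearMap)

@[simp]
lemma convBilin_apply (x y : Module.Dual K C) : convBilin K C x y = conv x y := rfl

lemma IsRationalDual.of_fintype {ι : Type*} [Fintype ι] {y : Module.Dual K C} (c : ι → C)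
    (y' : ι → Module.Dual K C) (h : ∀ x : Module.Dual K C, conv x y = ∑ i, x (c i) • y' i) :
    IsRationalDual y := by
  let e := Fintype.equivFin ι
  exact ⟨_, c ∘ e.symm, y' ∘ e.symm, fun x => by rw [h]; exact (e.symm.sum_comp _).symm⟩

section Action

variable {H : Type*} [AddCommMonoid H] [Module K H] (hact : H →ₗ[K] C →ₗ[K] C)

noncomputable def convAct (x y : Module.Dual K C) : H ⊗[K] H →ₗ[K] Module.Dual K C :=
  TensorProduct.lift <| (convBilin K C).compl₁₂
    (LinearMap.llcomp K C C K x ∘ₗ hact) (LinearMap.llcomp K C C K y ∘ₗ hact)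

@[simp]
lemma convAct_tmul (x y : Module.Dual K C) (u v : H) :
    convAct hact x y (u ⊗ₜ v) = conv (x ∘ₗ hact u) (y ∘ₗ hact v) := rfl

lemma conv_comp_act [Coalgebra K H]
    (hcomul :
      (Coalgebra.comul (R := K) (A := C)) ∘ₗ (TensorProduct.lift hact) =
        (TensorProduct.map (TensorProduct.lift hact) (TensorProduct.lift hact)) ∘ₗ
          (TensorProduct.tensorTensorTensorComm K H H C C).toLinearMap ∘ₗ
            (TensorProduct.map (Coalgebra.comul (R := K) (A := H))
              (Coalgebra.comul (R := K) (A := C))))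
    (x y : Module.Dual K C) (h : H) :
    conv x y ∘ₗ hact h = convAct hact x y (Coalgebra.comul h) := by
  ext c
  have hc := LinearMap.congr_fun hcomul (h ⊗ₜ c)
  simp only [LinearMap.comp_apply, TensorProduct.lift.tmul, TensorProduct.map_tmul] at hc
  simp only [LinearMap.comp_apply, conv, hc]
  induction Coalgebra.comul (R := K) h using TensorProduct.induction_on with
  | zero => simp
  | add s t hs ht => simp only [add_tmul, map_add, hs, ht, LinearMap.add_apply]
  | tmul u v =>
    simp only [convAct_tmul, conv, LinearMap.comp_apply]
    induction Coalgebra.comul (R := K) c using TensorProduct.induction_on with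
    | zero => simp
    | add s t hs ht => simp only [tmul_add, map_add, hs, ht]
    | tmul c₁ c₂ => simp

end Action

section AlgebraAction

variable {H : Type*} [Semiring H] [Algebra K H] (hact : H →ₗ[K] C →ₗ[K] C)

lemma convAct_comp_act
    (hmul : ∀ g h : H, hact (g * h) = (hact g) ∘ₗ (hact h)) (x y : Module.Dual K C) (g : H) :
    convAct hact (x ∘ₗ hact g) y = convAct hact x y ∘ₗ (LinearMap.mulLeft K g).rTensor H :=
  TensorProduct.ext' fun u v => by simp [hmul, LinearMap.comp_assoc]

lemma convAct_one_tmul (hone : hact 1 = LinearMap.id)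
    (x y : Module.Dual K C) (h : H) :
    convAct hact x y (1 ⊗ₜ h) = conv x (y ∘ₗ hact h) := by
  simp [hone]

end AlgebraAction

section HopfAction

variable {H : Type*} [Semiring H] [HopfAlgebra K H] (hact : H →ₗ[K] C →ₗ[K] C)

lemma conv_comp_act_eq_sum (hone : hact 1 = LinearMap.id)
    (hmul : ∀ g h : H, hact (g * h) = (hact g) ∘ₗ (hact h))
    (hcomul :
      (Coalgebra.comul (R := K) (A := C)) ∘ₗ (TensorProduct.lift hact) =
        (TensorProduct.map (TensorProduct.lift hact) (TensorProduct.lift hact)) ∘ₗ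
          (TensorProduct.tensorTensorTensorComm K H H C C).toLinearMap ∘ₗ
            (TensorProduct.map (Coalgebra.comul (R := K) (A := H))
              (Coalgebra.comul (R := K) (A := C))))
    (x y : Module.Dual K C) {h : H} {ι : Type*} (repr : Coalgebra.Repr K h ι) :
    conv x (y ∘ₗ hact h) = ∑ i ∈ repr.index,
      conv (x ∘ₗ hact (HopfAlgebra.antipode K (repr.left i))) y ∘ₗ hact (repr.right i) := by
  simp only [conv_comp_act hact hcomul, convAct_comp_act hact hmul, LinearMap.comp_apply,
    ← map_sum, HopfAlgebra.sum_rTensor_mulLeft_antipode_comul, convAct_one_tmul hact hone]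

end HopfAction

theorem stmt14_general {H : Type u} [Ring H] [HopfAlgebra K H]
    -- `C` is a left `H`-module coalgebra, with action `hact`:
    (hact : H →ₗ[K] C →ₗ[K] C)
    (hone : hact 1 = LinearMap.id)
    (hmul : ∀ g h : H, hact (g * h) = (hact g) ∘ₗ (hact h))
    -- the `H`-action is a coalgebra morphism: `Δ(h·c) = ∑ h₁·c₁ ⊗ h₂·c₂` ...
    (hcomul :
      (Coalgebra.comul (R := K) (A := C)) ∘ₗ (TensorProduct.lift hact) =
        (TensorProduct.map (TensorProduct.lift hact) (TensorProduct.lift hact)) ∘ₗ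
          (TensorProduct.tensorTensorTensorComm K H H C C).toLinearMap ∘ₗ
            (TensorProduct.map (Coalgebra.comul (R := K) (A := H))
              (Coalgebra.comul (R := K) (A := C)))) :
    -- `Rat(C*)` is a right `H`-submodule: if `y` is rational, so is `y·h = y ∘ (h·-)`.
    ∀ y : Module.Dual K C, IsRationalDual y → ∀ h : H,
      IsRationalDual (y ∘ₗ (hact h)) := by
  rintro y ⟨n, c, y', hy⟩ h
  let repr := Coalgebra.Repr.arbitrary K h
  refine IsRationalDual.of_fintype (ι := repr.index × Fin n)
    (fun p => hact (HopfAlgebra.antipode K (repr.left p.1)) (c p.2))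
    (fun p => y' p.2 ∘ₗ hact (repr.right p.1)) fun x => ?_
  rw [conv_comp_act_eq_sum hact hone hmul hcomul x y repr, Fintype.sum_prod_type,
    ← Finset.sum_coe_sort repr.index]
  refine Finset.sum_congr rfl fun i _ => ?_
  ext
  simp [hy]

theorem stmt14 {H : Type u} [Ring H] [HopfAlgebra K H]
    -- `C` is a left `H`-module coalgebra, with action `hact`:
    (hact : H →ₗ[K] C →ₗ[K] C)
    (hone : hact 1 = LinearMap.id)
    (hmul : ∀ g h : H, hact (g * h) = (hact g) ∘ₗ (hact h))
    -- the `H`-action is a coalgebra morphism: `Δ(h·c) = ∑ h₁·c₁ ⊗ h₂·c₂` ...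
    (hcomul :
      (Coalgebra.comul (R := K) (A := C)) ∘ₗ (TensorProduct.lift hact) =
        (TensorProduct.map (TensorProduct.lift hact) (TensorProduct.lift hact)) ∘ₗ
          (TensorProduct.tensorTensorTensorComm K H H C C).toLinearMap ∘ₗ
            (TensorProduct.map (Coalgebra.comul (R := K) (A := H))
              (Coalgebra.comul (R := K) (A := C))))
    -- ... and `ε(h·c) = ε(h)ε(c)`:
    (hcounit : ∀ (h : H) (c : C),
      Coalgebra.counit (R := K) (hact h c) =
        Coalgebra.counit (R := K) (A := H) h * Coalgebra.counit (R := K) (A := C) c) :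
    -- `Rat(C*)` is a right `H`-submodule: if `y` is rational, so is `y·h = y ∘ (h·-)`.
    ∀ y : Module.Dual K C, IsRationalDual y → ∀ h : H,
      IsRationalDual (y ∘ₗ (hact h)) :=
  stmt14_general hact hone hmul hcomul
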